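/- Let 𝔛 be a finite set, G an irreducible generator matrix on 𝔛, and ν the Markovian stick-breaking measure with generator G, viewed as a random element of the simplex Δ_𝔛 via x ↦ ν({x}). Then ν has full support on Δ_𝔛: for every η ∈ Δ_𝔛 and every ε > 0, P(|ν({x}) − η_x| < ε for all x ∈ 𝔛) > 0. -/

import Mathlib

open MeasureTheory ProbabilityTheory Matrix Filter

noncomputable section

/-- The Beta(1,θ) law on ℝ: density θ(1-x)^(θ-1) on [0,1]. -/
def beta1 (θ : ℝ) : Measure ℝ :=
  (volume.restrict (Set.Icc (0:ℝ) 1)).withDensity fun x => ENNReal.ofReal (θ * (1-x)^(θ-1))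

/-- Stick lengths of a residual allocation model: `stick X j` is `P_{j+1}`. -/
def stick {Ω : Type*} (X : ℕ → Ω → ℝ) (j : ℕ) (ω : Ω) : ℝ :=
  X j ω * ∏ i ∈ Finset.range j, (1 - X i ω)

/-- The random measure ν(A) = Σ_j P_j 1{T_j ∈ A}. -/
def nuSB {Ω 𝔛 : Type*} (X : ℕ → Ω → ℝ) (T : ℕ → Ω → 𝔛) (A : Set 𝔛) (ω : Ω) : ℝ :=
  ∑' j, stick X j ω * A.indicator (fun _ => (1:ℝ)) (T j ω)

/-- Conditional expectation given an event: E[Z | E] = E[Z 1_E]/P(E). -/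
def cexp {Ω : Type*} [MeasurableSpace Ω] (Pr : Measure Ω) (Z : Ω → ℝ) (E : Set Ω) : ℝ :=
  (∫ ω in E, Z ω ∂Pr) / (Pr E).toReal

/-- Generator matrix: nonnegative off-diagonal entries, rows summing to zero. -/
def IsGenerator {𝔛 : Type*} [Fintype 𝔛] [DecidableEq 𝔛] (G : Matrix 𝔛 𝔛 ℝ) : Prop :=
  (∀ x y, x ≠ y → 0 ≤ G x y) ∧ ∀ x, G x x = -∑ y ∈ Finset.univ.erase x, G x y

/-- Irreducibility of a square matrix: some power has positive (x,y) entry for all x,y. -/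
def IrreducibleMat {𝔛 : Type*} [Fintype 𝔛] [DecidableEq 𝔛] (Q : Matrix 𝔛 𝔛 ℝ) : Prop :=
  ∀ x y, ∃ m, 1 ≤ m ∧ 0 < (Q ^ m) x y

/-- Row-stochastic matrix. -/
def IsStochastic {𝔛 : Type*} [Fintype 𝔛] (Q : Matrix 𝔛 𝔛 ℝ) : Prop :=
  (∀ x y, 0 ≤ Q x y) ∧ ∀ x, ∑ y, Q x y = 1

-- D(A): diagonal 0-1 matrix of a set.
open scoped Classical in
def DMat {𝔛 : Type*} [Fintype 𝔛] [DecidableEq 𝔛] (A : Set 𝔛) : Matrix 𝔛 𝔛 ℝ :=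
  Matrix.diagonal fun x => if x ∈ A then 1 else 0

/-- Reverse-ordered matrix product M_k ⋯ M_1 of M indexed by `Fin k` (0-based). -/
def revProd {𝔛 : Type*} [Fintype 𝔛] [DecidableEq 𝔛] {k : ℕ} (M : Fin k → Matrix 𝔛 𝔛 ℝ) :
    Matrix 𝔛 𝔛 ℝ :=
  ((List.ofFn M).reverse).prod

-- The set S(k⃗) of sequences in `α^N` with exactly `kv a` entries equal to `a`.
open scoped Classical in
def SSeq {α : Type*} [Fintype α] [DecidableEq α] (kv : α → ℕ) (N : ℕ) :
    Finset (Fin N → α) :=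
  Finset.univ.filter fun σ => ∀ a, (Finset.univ.filter fun i => σ i = a).card = kv a

end

/-!
Irreducibility gives a path `p 0, …, p N` of positive transition probabilities that starts in a
state charged by `μ` and visits every state. Putting mass `η x` at one visit of `p` to each `x`,
these masses are the first `N + 1` sticks of a stick-breaking sequence `v` that uses up the whole
unit length. On the event that the chain follows `p`, the errors `|ν{x} - η x|` are controlled by
a continuous function of the first `N + 1` Beta variables that vanishes at `v`, hence stay below
`ε` on a cylinder around `v`. That cylinder has positive Beta probability, the path has positive
probability, and the two events are independent.
-/

open Finset

section Walks

variable {α : Type*} {r : α → α → Prop}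

theorem exists_walk_extend_of_reflTransGen {n : ℕ} {p : ℕ → α}
    (hp : ∀ i < n, r (p i) (p (i + 1))) {c : α} (hc : Relation.ReflTransGen r (p n) c) :
    ∃ m, ∃ q : ℕ → α, n ≤ m ∧ (∀ i ≤ n, q i = p i) ∧ q m = c ∧
      ∀ i < m, r (q i) (q (i + 1)) := by
  induction hc with
  | refl => exact ⟨n, p, le_rfl, fun _ _ => rfl, rfl, hp⟩
  | @tail b c _ hbc ih =>
    obtain ⟨m, q, hnm, hqp, hqm, hq⟩ := ih
    refine ⟨m + 1, fun i => if i = m + 1 then c else q i, by omega,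
      fun i hi => by simp [show i ≠ m + 1 by omega, hqp i hi], by simp, fun i hi => ?_⟩
    rcases Nat.lt_succ_iff_lt_or_eq.mp hi with hi | rfl
    · simpa [show i ≠ m + 1 by omega, show i ≠ m by omega] using hq i hi
    · simpa [hqm] using hbc

theorem exists_walk_visiting_all [Fintype α] (h : ∀ a b, Relation.ReflTransGen r a b) (a : α) :
    ∃ n, ∃ p : ℕ → α, p 0 = a ∧ (∀ i < n, r (p i) (p (i + 1))) ∧ ∀ b, ∃ i ≤ n, p i = b := by
  classical
  suffices ∀ s : Finset α, ∃ n, ∃ p : ℕ → α, p 0 = a ∧ (∀ i < n, r (p i) (p (i + 1))) ∧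
      ∀ b ∈ s, ∃ i ≤ n, p i = b by
    obtain ⟨n, p, hp0, hp, hvisit⟩ := this Finset.univ
    exact ⟨n, p, hp0, hp, fun b => hvisit b (Finset.mem_univ b)⟩
  intro s
  induction s using Finset.induction_on with
  | empty => exact ⟨0, fun _ => a, rfl, by simp, by simp⟩
  | insert c s _ ih =>
    obtain ⟨n, p, hp0, hp, hvisit⟩ := ih
    obtain ⟨m, q, hnm, hqp, hqm, hq⟩ := exists_walk_extend_of_reflTransGen hp (h (p n) c)
    refine ⟨m, q, (hqp 0 n.zero_le).trans hp0, hq, fun b hb => ?_⟩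
    rcases Finset.mem_insert.mp hb with rfl | hb
    · exact ⟨m, le_rfl, hqm⟩
    · obtain ⟨i, hin, rfl⟩ := hvisit b hb
      exact ⟨i, hin.trans hnm, hqp i hin⟩

end Walks

theorem Matrix.reflTransGen_of_pow_apply_pos {ι R : Type*} [Fintype ι] [DecidableEq ι]
    [Semiring R] [LinearOrder R] [IsStrictOrderedRing R] {Q : Matrix ι ι R}
    (hQ : ∀ a b, 0 ≤ Q a b) {m : ℕ} {x y : ι} (h : 0 < (Q ^ m) x y) :
    Relation.ReflTransGen (fun a b => 0 < Q a b) x y := by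
  induction m generalizing y with
  | zero =>
    obtain rfl : x = y := by by_contra hxy; simp [Matrix.one_apply_ne hxy] at h
    exact .refl
  | succ m ih =>
    rw [pow_succ, Matrix.mul_apply] at h
    obtain ⟨z, -, hz⟩ := Finset.exists_lt_of_sum_lt (f := fun _ => (0 : R)) (by simpa using h)
    rcases pos_and_pos_or_neg_and_neg_of_mul_pos hz with ⟨hxz, hzy⟩ | ⟨-, hzy⟩
    · exact (ih hxz).tail hzy
    · exact absurd (hQ z y) hzy.not_ge

theorem IsGenerator.one_add_inv_smul_nonneg {ι : Type*} [Fintype ι] [DecidableEq ι]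
    {G : Matrix ι ι ℝ} (hG : IsGenerator G) {θ : ℝ} (hθ : 0 < θ) (hθG : ∀ x, |G x x| ≤ θ)
    (x y : ι) : 0 ≤ (1 + θ⁻¹ • G) x y := by
  rcases eq_or_ne x y with rfl | hxy
  · have : θ⁻¹ * -θ ≤ θ⁻¹ * G x x := by gcongr; exact neg_le_of_abs_le (hθG x)
    simp only [Matrix.add_apply, Matrix.one_apply_eq, Matrix.smul_apply, smul_eq_mul]
    rw [mul_neg, inv_mul_cancel₀ hθ.ne'] at this
    linarith
  · simpa [Matrix.one_apply_ne hxy] using mul_nonneg (inv_nonneg.mpr hθ.le) (hG.1 x y hxy)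

theorem sum_range_mul_prod_one_sub {R : Type*} [CommRing R] (v : ℕ → R) (n : ℕ) :
    ∑ j ∈ range n, v j * ∏ i ∈ range j, (1 - v i) = 1 - ∏ i ∈ range n, (1 - v i) := by
  induction n with
  | zero => simp
  | succ n ih => rw [sum_range_succ, prod_range_succ, ih]; ring

theorem exists_stick_eq (w : ℕ → ℝ) (hw0 : ∀ j, 0 ≤ w j) {n : ℕ}
    (hw1 : ∑ j ∈ range n, w j = 1) :
    ∃ v : ℕ → ℝ, (∀ j, v j ∈ Set.Icc 0 1) ∧ ∀ j < n, v j * ∏ i ∈ range j, (1 - v i) = w j := by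
  -- `r j` is the mass left at step `j`; when it is `0`, so is `w j`, and `w j / r j = 0`.
  set r : ℕ → ℝ := fun j => ∑ i ∈ Ico j n, w i
  have hr_succ : ∀ j < n, r j = w j + r (j + 1) := fun j hj => sum_eq_sum_Ico_succ_bot hj w
  have hr0 : ∀ j, 0 ≤ r j := fun j => sum_nonneg fun i _ => hw0 i
  have hwr : ∀ j < n, w j ≤ r j := fun j hj => by linarith [hr_succ j hj, hr0 (j + 1)]
  have hcancel : ∀ j < n, w j / r j * r j = w j := fun j hj =>
    div_mul_cancel_of_imp fun h => le_antisymm (h ▸ hwr j hj) (hw0 j)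
  have hprod : ∀ j ≤ n, ∏ i ∈ range j, (1 - w i / r i) = r j := by
    intro j
    induction j with
    | zero => simp [r, hw1]
    | succ j ih =>
      intro hj
      rw [prod_range_succ, ih (by omega), mul_one_sub, mul_comm, hcancel j hj, hr_succ j hj]
      ring
  refine ⟨fun j => w j / r j, fun j => ⟨div_nonneg (hw0 j) (hr0 j), ?_⟩, fun j hj => ?_⟩
  · rcases lt_or_ge j n with hj | hj
    · exact div_le_one_of_le₀ (hwr j hj) (hr0 j)
    · simp [r, Finset.Ico_eq_empty_of_le hj]
  · rw [hprod j hj.le, hcancel j hj]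

theorem exists_weights_sum_indicator_eq {α : Type*} [Fintype α] (p : ℕ → α) {n : ℕ}
    (hp : ∀ x, ∃ j < n, p j = x) (η : α → ℝ) (hη0 : ∀ x, 0 ≤ η x) :
    ∃ w : ℕ → ℝ, (∀ j, 0 ≤ w j) ∧
      ∀ x, ∑ j ∈ range n, w j * ({x} : Set α).indicator (fun _ => 1) (p j) = η x := by
  classical
  choose k hkn hpk using hp
  refine ⟨fun j => if j = k (p j) then η (p j) else 0, fun j => ite_nonneg (hη0 _) le_rfl,
    fun x => ?_⟩
  have hterm : ∀ j, (if j = k (p j) then η (p j) else 0) *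
      ({x} : Set α).indicator (fun _ => 1) (p j) = if j = k x then η x else 0 := fun j => by
    by_cases hj : p j = x
    · simp [hj]
    · have : j ≠ k x := fun h => hj (h ▸ hpk x)
      simp [hj, this]
  simp only [hterm, sum_ite_eq', mem_range.mpr (hkn x), if_true]

theorem exists_stick_sum_indicator_eq {α : Type*} [Fintype α] (p : ℕ → α) {n : ℕ}
    (hp : ∀ x, ∃ j < n, p j = x) (η : α → ℝ) (hη0 : ∀ x, 0 ≤ η x) (hη1 : ∑ x, η x = 1) :
    ∃ v : ℕ → ℝ, (∀ j, v j ∈ Set.Icc 0 1) ∧ ∏ i ∈ range n, (1 - v i) = 0 ∧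
      ∀ x, ∑ j ∈ range n, (v j * ∏ i ∈ range j, (1 - v i)) *
        ({x} : Set α).indicator (fun _ => 1) (p j) = η x := by
  obtain ⟨w, hw0, hwη⟩ := exists_weights_sum_indicator_eq p hp η hη0
  have hw1 : ∑ j ∈ range n, w j = 1 := by
    have hind : ∀ j, ∑ x, ({x} : Set α).indicator (fun _ => (1 : ℝ)) (p j) = 1 := fun j => by
      classical
      simp [Set.indicator_apply, eq_comm]
    simp_rw [← hη1, ← hwη, sum_comm (s := univ), ← mul_sum, hind, mul_one]
  obtain ⟨v, hv01, hvw⟩ := exists_stick_eq w hw0 hw1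
  have hsum : ∑ j ∈ range n, v j * ∏ i ∈ range j, (1 - v i) = ∑ j ∈ range n, w j :=
    sum_congr rfl fun j hj => hvw j (mem_range.mp hj)
  refine ⟨v, hv01, by linarith [sum_range_mul_prod_one_sub v n], fun x => ?_⟩
  rw [← hwη x]
  exact sum_congr rfl fun j hj => by rw [hvw j (mem_range.mp hj)]

section Sticks

variable {Ω 𝔛 : Type*} {X : ℕ → Ω → ℝ} {ω : Ω}

theorem prod_range_one_sub_nonneg (hX : ∀ j, X j ω ∈ Set.Icc 0 1) (n : ℕ) :
    0 ≤ ∏ i ∈ range n, (1 - X i ω) :=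
  prod_nonneg fun i _ => sub_nonneg.mpr (hX i).2

theorem sum_range_stick (X : ℕ → Ω → ℝ) (ω : Ω) (n : ℕ) :
    ∑ j ∈ range n, stick X j ω = 1 - ∏ i ∈ range n, (1 - X i ω) :=
  sum_range_mul_prod_one_sub (X · ω) n

theorem stick_nonneg (hX : ∀ j, X j ω ∈ Set.Icc 0 1) (j : ℕ) : 0 ≤ stick X j ω :=
  mul_nonneg (hX j).1 (prod_range_one_sub_nonneg hX j)

theorem abs_nuSB_sub_sum_range_le (hX : ∀ j, X j ω ∈ Set.Icc 0 1) (T : ℕ → Ω → 𝔛) (A : Set 𝔛)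
    (n : ℕ) :
    |nuSB X T A ω - ∑ j ∈ range n, stick X j ω * A.indicator (fun _ => 1) (T j ω)| ≤
      ∏ i ∈ range n, (1 - X i ω) := by
  set g : ℕ → ℝ := fun j => stick X j ω * A.indicator (fun _ => 1) (T j ω)
  have hg : ∀ j, 0 ≤ g j ∧ g j ≤ stick X j ω := fun j => by
    by_cases h : T j ω ∈ A <;> simp [g, h, stick_nonneg hX j]
  have htail : ∀ m, ∑ k ∈ range m, g (n + k) ≤ ∏ i ∈ range n, (1 - X i ω) := fun m =>
    calc ∑ k ∈ range m, g (n + k)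
        ≤ ∑ k ∈ range m, stick X (n + k) ω := sum_le_sum fun k _ => (hg (n + k)).2
      _ = ∏ i ∈ range n, (1 - X i ω) - ∏ i ∈ range (n + m), (1 - X i ω) := by
        have := sum_range_add (stick X · ω) n m
        rw [sum_range_stick, sum_range_stick] at this
        linarith
      _ ≤ ∏ i ∈ range n, (1 - X i ω) := by linarith [prod_range_one_sub_nonneg hX (n + m)]
  have hsumm : Summable g := summable_of_sum_range_le (c := 1) (fun j => (hg j).1) fun m =>
    (sum_le_sum fun j _ => (hg j).2).trans <| by
      rw [sum_range_stick]; linarith [prod_range_one_sub_nonneg hX m]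
  rw [nuSB, ← hsumm.sum_add_tsum_nat_add n, add_sub_cancel_left, abs_of_nonneg
    (tsum_nonneg fun k => (hg _).1)]
  exact Real.tsum_le_of_sum_range_le (fun k => (hg _).1) fun m => by
    simpa only [add_comm] using htail m

theorem abs_nuSB_sub_lt (hX : ∀ j, X j ω ∈ Set.Icc 0 1) {T : ℕ → Ω → 𝔛} {n : ℕ} {p : ℕ → 𝔛}
    (hT : ∀ j < n, T j ω = p j) {A : Set 𝔛} {c ε : ℝ}
    (h : ∏ i ∈ range n, (1 - X i ω) +
      |∑ j ∈ range n, stick X j ω * A.indicator (fun _ => 1) (p j) - c| < ε) :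
    |nuSB X T A ω - c| < ε := by
  have hsum : ∑ j ∈ range n, stick X j ω * A.indicator (fun _ => 1) (T j ω) =
      ∑ j ∈ range n, stick X j ω * A.indicator (fun _ => 1) (p j) :=
    sum_congr rfl fun j hj => by rw [hT j (mem_range.mp hj)]
  rw [← hsum] at h
  calc |nuSB X T A ω - c|
      ≤ |nuSB X T A ω - ∑ j ∈ range n, stick X j ω * A.indicator (fun _ => 1) (T j ω)| +
        |∑ j ∈ range n, stick X j ω * A.indicator (fun _ => 1) (T j ω) - c| := abs_sub_le _ _ _
    _ < ε := by linarith [abs_nuSB_sub_sum_range_le hX T A n]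

end Sticks

theorem ae_beta1_mem_Icc (θ : ℝ) : ∀ᵐ x ∂beta1 θ, x ∈ Set.Icc 0 1 :=
  (withDensity_absolutelyContinuous _ _).ae_le (ae_restrict_mem measurableSet_Icc)

theorem beta1_pos_of_isOpen {θ : ℝ} (hθ : 0 < θ) {s : Set ℝ} (hs : IsOpen s)
    (hne : (s ∩ Set.Icc 0 1).Nonempty) : 0 < beta1 θ s := by
  have hIoo : (Set.Ioo (0 : ℝ) 1 ∩ s).Nonempty := by
    rwa [← closure_inter_open_nonempty_iff hs, closure_Ioo zero_ne_one, Set.inter_comm]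
  have hdens : Set.Ioo 0 1 ∩ s ⊆
      {x | ENNReal.ofReal (θ * (1 - x) ^ (θ - 1)) ≠ 0} ∩ s ∩ Set.Icc 0 1 := fun x hx =>
    ⟨⟨by simpa using mul_pos hθ (Real.rpow_pos_of_pos (sub_pos.mpr hx.1.2) _), hx.2⟩,
      Set.Ioo_subset_Icc_self hx.1⟩
  rw [pos_iff_ne_zero, beta1, Ne, withDensity_apply_eq_zero' (by fun_prop)]
  exact ((isOpen_Ioo.inter hs).measure_pos volume hIoo |>.trans_le
    ((measure_mono hdens).trans (Measure.le_restrict_apply _ _))).ne'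

theorem ProbabilityTheory.iIndepFun.measure_preimage_pi_pos {Ω : Type*} [MeasurableSpace Ω]
    {Pr : Measure Ω} {X : ℕ → Ω → ℝ} (hXiid : iIndepFun X Pr) (hXmeas : ∀ j, Measurable (X j))
    {θ : ℝ} (hθ : 0 < θ) (hXlaw : ∀ j, Measure.map (X j) Pr = beta1 θ) {I : Finset ℕ}
    {u : ℕ → Set ℝ} (hu : ∀ i ∈ I, IsOpen (u i) ∧ (u i ∩ Set.Icc 0 1).Nonempty) :
    0 < Pr ((fun ω j => X j ω) ⁻¹' (I : Set ℕ).pi u) := by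
  have hpi : (fun ω j => X j ω) ⁻¹' (I : Set ℕ).pi u = ⋂ i ∈ I, X i ⁻¹' u i := by ext; simp
  rw [hpi, hXiid.measure_inter_preimage_eq_mul I fun i hi => (hu i hi).1.measurableSet,
    CanonicallyOrderedAdd.prod_pos]
  intro i hi
  rw [← Measure.map_apply (hXmeas i) (hu i hi).1.measurableSet, hXlaw i]
  exact beta1_pos_of_isOpen hθ (hu i hi).1 (hu i hi).2

theorem stmt7_general
    {𝔛 Ω : Type*} [Fintype 𝔛] [DecidableEq 𝔛] [MeasurableSpace 𝔛] [DiscreteMeasurableSpace 𝔛]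
    [MeasurableSpace Ω] (Pr : Measure Ω)
    (G : Matrix 𝔛 𝔛 ℝ) (μ : 𝔛 → ℝ) (θ : ℝ)
    (hθpos : 0 < θ) (hθG : ∀ x, |G x x| ≤ θ)
    (hgen : IsGenerator G) (hirr : IrreducibleMat (1 + θ⁻¹ • G))
    (hμ1 : ∑ x, μ x = 1)
    -- the GEM(θ) ingredients: i.i.d. Beta(1,θ) variables X
    (X : ℕ → Ω → ℝ) (hXmeas : ∀ j, Measurable (X j))
    (hXiid : iIndepFun X Pr)
    (hXlaw : ∀ j, Measure.map (X j) Pr = beta1 θ)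
    -- the stationary Markov chain T with kernel Q = I + G/θ and initial law μ
    (T : ℕ → Ω → 𝔛)
    (hTlaw : ∀ (m : ℕ) (t : Fin (m+1) → 𝔛),
      Pr {ω | ∀ i : Fin (m+1), T i ω = t i} =
        ENNReal.ofReal (μ (t 0) * ∏ i : Fin m, (1 + θ⁻¹ • G) (t i.castSucc) (t i.succ)))
    -- independence of the GEM sticks and the chain
    (hindep : IndepFun (fun ω j => X j ω) (fun ω j => T j ω) Pr)
    (η : 𝔛 → ℝ) (hη0 : ∀ x, 0 ≤ η x) (hη1 : ∑ x, η x = 1) (ε : ℝ) (hε : 0 < ε) :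
    0 < Pr {ω | ∀ x, |nuSB X T {x} ω - η x| < ε} := by
  obtain ⟨x₀, -, hx₀⟩ := Finset.exists_lt_of_sum_lt (s := Finset.univ) (f := fun _ => (0 : ℝ))
    (g := μ) (by simp [hμ1])
  obtain ⟨N, p, rfl, hstep, hvisit⟩ := exists_walk_visiting_all (fun x y => (hirr x y).elim
    fun _ hm => reflTransGen_of_pow_apply_pos (hgen.one_add_inv_smul_nonneg hθpos hθG) hm.2) x₀
  obtain ⟨v, hv01, hvprod, hvη⟩ := exists_stick_sum_indicator_eq p (n := N + 1)
    (fun x => (hvisit x).imp fun _ hj => ⟨Nat.lt_succ_of_le hj.1, hj.2⟩) η hη0 hη1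
  let U : Set (ℕ → ℝ) := {v | ∀ x, ∏ i ∈ Finset.range (N + 1), (1 - v i) +
    |∑ j ∈ Finset.range (N + 1), (v j * ∏ i ∈ Finset.range j, (1 - v i)) *
      ({x} : Set 𝔛).indicator (fun _ => 1) (p j) - η x| < ε}
  have hU : IsOpen U := by
    simp only [U, Set.ofPred_forall]
    exact isOpen_iInter_of_finite fun x => isOpen_lt (by fun_prop) continuous_const
  obtain ⟨I, u, hu, hIU⟩ := isOpen_pi_iff.mp hU v fun x => by
    rw [hvprod, hvη, sub_self, abs_zero, zero_add]; exact hε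
  have hEX := hXiid.measure_preimage_pi_pos hXmeas hθpos hXlaw
    fun i hi => ⟨(hu i hi).1, v i, (hu i hi).2, hv01 i⟩
  have hET : 0 < Pr ((fun ω j => T j ω) ⁻¹' {t | ∀ i : Fin (N + 1), t i = p i}) := by
    rw [Set.preimage_ofPred_eq, hTlaw N (fun i => p i)]
    exact ENNReal.ofReal_pos.mpr (mul_pos hx₀ (Finset.prod_pos fun i _ => hstep i i.isLt))
  have hX01 : ∀ᵐ ω ∂Pr, ∀ j, X j ω ∈ Set.Icc 0 1 := ae_all_iff.mpr fun j =>
    ae_of_ae_map (hXmeas j).aemeasurable (by rw [hXlaw j]; exact ae_beta1_mem_Icc θ)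
  calc 0 < Pr ((fun ω j => X j ω) ⁻¹' (I : Set ℕ).pi u ∩
        (fun ω j => T j ω) ⁻¹' {t | ∀ i : Fin (N + 1), t i = p i}) := by
        rw [hindep.measure_inter_preimage_eq_mul _ _
          (.pi I.countable_toSet fun i hi => (hu i hi).1.measurableSet) (by measurability)]
        exact ENNReal.mul_pos hEX.ne' hET.ne'
    _ ≤ Pr {ω | ∀ x, |nuSB X T {x} ω - η x| < ε} := measure_mono_ae <| by
        filter_upwards [hX01] with ω hω ⟨hωX, hωT⟩ x
        exact abs_nuSB_sub_lt hω (fun j hj => hωT ⟨j, hj⟩) (hIU hωX x)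

/-- Proposition 3.7: the MSB measure has full support on the simplex. -/
theorem stmt7
    {𝔛 Ω : Type*} [Fintype 𝔛] [DecidableEq 𝔛] [MeasurableSpace 𝔛] [DiscreteMeasurableSpace 𝔛]
    [MeasurableSpace Ω] (Pr : Measure Ω) [IsProbabilityMeasure Pr]
    (G : Matrix 𝔛 𝔛 ℝ) (μ : 𝔛 → ℝ) (θ : ℝ)
    (hθpos : 0 < θ) (hθG : ∀ x, |G x x| ≤ θ)
    (hgen : IsGenerator G) (hirr : IrreducibleMat (1 + θ⁻¹ • G))
    (hμ0 : ∀ x, 0 ≤ μ x) (hμ1 : ∑ x, μ x = 1) (hμG : ∀ y, ∑ x, μ x * G x y = 0)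
    -- the GEM(θ) ingredients: i.i.d. Beta(1,θ) variables X
    (X : ℕ → Ω → ℝ) (hXmeas : ∀ j, Measurable (X j))
    (hXiid : iIndepFun X Pr)
    (hXlaw : ∀ j, Measure.map (X j) Pr = beta1 θ)
    -- the stationary Markov chain T with kernel Q = I + G/θ and initial law μ
    (T : ℕ → Ω → 𝔛) (hTmeas : ∀ j, Measurable (T j))
    (hTlaw : ∀ (m : ℕ) (t : Fin (m+1) → 𝔛),
      Pr {ω | ∀ i : Fin (m+1), T i ω = t i} =
        ENNReal.ofReal (μ (t 0) * ∏ i : Fin m, (1 + θ⁻¹ • G) (t i.castSucc) (t i.succ)))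
    -- independence of the GEM sticks and the chain
    (hindep : IndepFun (fun ω j => X j ω) (fun ω j => T j ω) Pr)
    (η : 𝔛 → ℝ) (hη0 : ∀ x, 0 ≤ η x) (hη1 : ∑ x, η x = 1) (ε : ℝ) (hε : 0 < ε) :
    0 < Pr {ω | ∀ x, |nuSB X T {x} ω - η x| < ε} :=
  stmt7_general Pr G μ θ hθpos hθG hgen hirr hμ1 X hXmeas hXiid hXlaw T hTlaw hindep η hη0 hη1 ε hε
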